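/- arXiv:1506.05064 — 2 statements merged into one kernel-verified Lean document; each statement's English description precedes it below -/
import Mathlib

section
/- Let X be a connected finite simple graph that is not isomorphic to a cycle C_n, and let C_X be the graph obtained from X by replacing every edge p_i p_j of X with a path p_i q_{ik} r_k q_{jk} p_j of length four (where r_k and the q-vertices are new vertices, one r_k per edge and two q-vertices per edge). Then the automorphism group of C_X is isomorphic to the automorphism group of X. -/
/-- The vertex set of the graph `C_X`: the original vertices `P`, the
intermediate vertices `Q` (one for each incidence of a vertex with an edge),
and the middle vertices `R` (one for each edge). -/
def CXVert {V : Type} (X : SimpleGraph V) : Type :=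
  V ⊕ ({p : V × X.edgeSet // p.1 ∈ (p.2 : Sym2 V)} ⊕ X.edgeSet)

/-- The graph `C_X` obtained from `X` by replacing every edge `p_i p_j` by a
path `p_i q_{ik} r_k q_{jk} p_j` of length four. -/
def CX {V : Type} (X : SimpleGraph V) : SimpleGraph (CXVert X) :=
  SimpleGraph.fromRel (fun a b =>
    match a, b with
    | Sum.inl v, Sum.inr (Sum.inl q) => v = q.1.1
    | Sum.inr (Sum.inl q), Sum.inr (Sum.inr r) => q.1.2 = r
    | _, _ => False)

/-
Every vertex of `Q ∪ R` has exactly two neighbours in `C_X`, while `p_v` has as many as `v`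
has in `X`. A connected finite graph all of whose vertices have two neighbours is a cycle, so
`X` has a vertex `b` with a different number of neighbours, and every automorphism `φ` of `C_X`
sends `p_b` into `P`. If `φ p_u = p_{u'}` and `uw` is an edge, injectivity forces `φ` to map
the subdivided edge `p_u q r q p_w` onto a subdivided edge `p_{u'} q r q p_{w'}`; by
connectivity `φ` therefore permutes `P`, inducing an automorphism `α` of `X`. Each `r_k` is
pinned down by the endpoints of its edge and each `q_{ik}` by its two neighbours, so `φ` is the
canonical extension `CX.map α` of `α`, and `α ↦ CX.map α` is bijective.
-/

namespace SimpleGraph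

variable {V : Type*} {G : SimpleGraph V}

lemma Reachable.mem_of_adj_mem {S : Set V} (hS : ∀ ⦃u w⦄, G.Adj u w → u ∈ S → w ∈ S)
    {u v : V} (h : G.Reachable u v) (hu : u ∈ S) : v ∈ S := by
  obtain ⟨p⟩ := h
  induction p with
  | nil => exact hu
  | cons huw _ ih => exact ih (hS huw hu)

lemma ncard_neighborSet_cycleGraph {n : ℕ} (v : Fin (n + 3)) :
    ((cycleGraph (n + 3)).neighborSet v).ncard = 2 := by
  rw [← coe_neighborFinset, Set.ncard_coe_finset, card_neighborFinset_eq_degree,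
    cycleGraph_degree_three_le]

theorem Connected.exists_iso_cycleGraph [Finite V] (hconn : G.Connected)
    (h2 : ∀ v, (G.neighborSet v).ncard = 2) : ∃ n, Nonempty (G ≃g cycleGraph n) := by
  obtain ⟨v⟩ := hconn.nonempty
  have hcyc : G.IsCycles := fun v _ => h2 v
  obtain ⟨c, hc, -⟩ := hcyc.exists_cycle_toSubgraph_verts_eq_connectedComponentSupp
    (c := G.connectedComponentMk v) rfl (Set.nonempty_of_ncard_ne_zero (by simp [h2]))
  obtain ⟨n, hn⟩ := Nat.exists_eq_add_of_le' hc.three_le_length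
  obtain ⟨f⟩ := (cycleGraph_isContained_iff (n := n + 3) (by omega)).2 ⟨v, c, hc, hn⟩
  -- An injective hom between graphs all of whose vertices have two neighbours
  -- maps each neighbourhood onto the neighbourhood of the image.
  have hnbr : ∀ i, G.neighborSet (f i) = f '' (cycleGraph (n + 3)).neighborSet i := fun i =>
    (Set.eq_of_subset_of_ncard_le (f.toHom.image_neighborSet_subset i)
      (by rw [Set.ncard_image_of_injective _ f.injective, h2, ncard_neighborSet_cycleGraph])
      (Set.toFinite _)).symm
  have hsurj : Function.Surjective f := fun w =>
    (hconn.preconnected (f 0) w).mem_of_adj_mem (S := Set.range f)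
      (by
        rintro _ y hy ⟨i, rfl⟩
        obtain ⟨j, -, rfl⟩ := (hnbr i).subset hy
        exact ⟨j, rfl⟩)
      ⟨0, rfl⟩
  refine ⟨n + 3, ⟨(RelIso.mk (Equiv.ofBijective f ⟨f.injective, hsurj⟩) ?_).symm⟩⟩
  intro i j
  refine ⟨fun h => ?_, f.toHom.map_adj⟩
  obtain ⟨k, hk, hkj⟩ := (hnbr i).subset h
  rwa [← f.injective hkj]

end SimpleGraph

namespace CX

variable {V W : Type} {X : SimpleGraph V} {Y : SimpleGraph W}

abbrev Incidence (X : SimpleGraph V) := {x : V × X.edgeSet // x.1 ∈ (x.2 : Sym2 V)}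

-- The vertices `p_i`, `q_{ik}`, `r_k`. Unlike bare `Sum.inl`/`Sum.inr` terms, these are typed
-- by `CXVert X` itself, which `simp` and `rw` need since they do not unfold `CXVert`.
def p (v : V) : CXVert X := .inl v
def q (i : Incidence X) : CXVert X := .inr (.inl i)
def r (e : X.edgeSet) : CXVert X := .inr (.inr e)

lemma eq_p_or_q_or_r (z : CXVert X) :
    (∃ v, z = p v) ∨ (∃ i, z = q i) ∨ ∃ e, z = r e := by
  rcases z with v | i | e
  exacts [.inl ⟨v, rfl⟩, .inr (.inl ⟨i, rfl⟩), .inr (.inr ⟨e, rfl⟩)]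

@[simp] lemma p_inj {v w : V} : (p v : CXVert X) = p w ↔ v = w := Sum.inl_injective.eq_iff
@[simp] lemma q_inj {i j : Incidence X} : q i = q j ↔ i = j :=
  Sum.inr_injective.eq_iff.trans Sum.inl_injective.eq_iff
@[simp] lemma r_inj {e e' : X.edgeSet} : r e = r e' ↔ e = e' :=
  Sum.inr_injective.eq_iff.trans Sum.inr_injective.eq_iff
@[simp] lemma p_ne_q {v : V} {i : Incidence X} : p v ≠ q i := Sum.inl_ne_inr
@[simp] lemma p_ne_r {v : V} {e : X.edgeSet} : p v ≠ r e := Sum.inl_ne_inr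
@[simp] lemma q_ne_r {i : Incidence X} {e : X.edgeSet} : q i ≠ r e :=
  fun h => Sum.inl_ne_inr (Sum.inr_injective h)
@[simp] lemma r_ne_p {v : V} {e : X.edgeSet} : r e ≠ p v := p_ne_r.symm
@[simp] lemma r_ne_q {i : Incidence X} {e : X.edgeSet} : r e ≠ q i := q_ne_r.symm

@[simp] lemma adj_p_p {v w : V} : ¬ (CX X).Adj (p v) (p w) :=
  fun h => by simpa [p, q, r] using ((SimpleGraph.fromRel_adj _ _ _).1 h).2

@[simp] lemma adj_p_q {v : V} {i : Incidence X} : (CX X).Adj (p v) (q i) ↔ i.1.1 = v :=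
  (SimpleGraph.fromRel_adj _ _ _).trans
    ⟨fun h => by simpa [p, q, eq_comm] using h.2, fun h => ⟨p_ne_q, by simp [p, q, h]⟩⟩

@[simp] lemma adj_p_r {v : V} {e : X.edgeSet} : ¬ (CX X).Adj (p v) (r e) :=
  fun h => by simpa [p, q, r] using ((SimpleGraph.fromRel_adj _ _ _).1 h).2

@[simp] lemma adj_q_q {i j : Incidence X} : ¬ (CX X).Adj (q i) (q j) :=
  fun h => by simpa [p, q, r] using ((SimpleGraph.fromRel_adj _ _ _).1 h).2

@[simp] lemma adj_q_r {i : Incidence X} {e : X.edgeSet} : (CX X).Adj (q i) (r e) ↔ i.1.2 = e :=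
  (SimpleGraph.fromRel_adj _ _ _).trans
    ⟨fun h => by simpa [q, r] using h.2, fun h => ⟨q_ne_r, by simp [q, r, h]⟩⟩

@[simp] lemma adj_r_r {e e' : X.edgeSet} : ¬ (CX X).Adj (r e) (r e') :=
  fun h => by simpa [p, q, r] using ((SimpleGraph.fromRel_adj _ _ _).1 h).2

@[simp] lemma adj_q_p {v : V} {i : Incidence X} : (CX X).Adj (q i) (p v) ↔ i.1.1 = v :=
  (CX X).adj_comm _ _ |>.trans adj_p_q

@[simp] lemma adj_r_p {v : V} {e : X.edgeSet} : ¬ (CX X).Adj (r e) (p v) :=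
  fun h => adj_p_r h.symm

@[simp] lemma adj_r_q {i : Incidence X} {e : X.edgeSet} : (CX X).Adj (r e) (q i) ↔ i.1.2 = e :=
  (CX X).adj_comm _ _ |>.trans adj_q_r

lemma adj_p_iff {v : V} {z : CXVert X} :
    (CX X).Adj (p v) z ↔ ∃ i : Incidence X, i.1.1 = v ∧ z = q i := by
  obtain ⟨w, rfl⟩ | ⟨i, rfl⟩ | ⟨e, rfl⟩ := eq_p_or_q_or_r z <;> simp

lemma adj_q_iff {i : Incidence X} {z : CXVert X} :
    (CX X).Adj (q i) z ↔ z = p i.1.1 ∨ z = r i.1.2 := by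
  obtain ⟨w, rfl⟩ | ⟨j, rfl⟩ | ⟨e, rfl⟩ := eq_p_or_q_or_r z <;> simp [eq_comm]

lemma adj_r_iff {e : X.edgeSet} {z : CXVert X} :
    (CX X).Adj (r e) z ↔ ∃ i : Incidence X, i.1.2 = e ∧ z = q i := by
  obtain ⟨w, rfl⟩ | ⟨i, rfl⟩ | ⟨e', rfl⟩ := eq_p_or_q_or_r z <;> simp

lemma ncard_neighborSet_p (v : V) :
    ((CX X).neighborSet (p v)).ncard = (X.neighborSet v).ncard := by
  refine (Set.ncard_congr (fun w hw => q ⟨(v, ⟨s(v, w), hw⟩), Sym2.mem_mk_left _ _⟩)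
    (fun _ _ => (SimpleGraph.mem_neighborSet _ _ _).2 (adj_p_q.2 rfl))
    (fun w w' _ _ h => ?_) (fun z hz => ?_)).symm
  · exact Sym2.congr_right.1 (congrArg (fun i : Incidence X => (i.1.2 : Sym2 V)) (q_inj.1 h))
  · obtain ⟨i, rfl, rfl⟩ := adj_p_iff.1 hz
    have hi := Sym2.other_spec i.2
    refine ⟨Sym2.Mem.other i.2, ?_, by simp [hi]⟩
    show X.Adj _ _
    rw [← SimpleGraph.mem_edgeSet, hi]
    exact i.1.2.2

lemma ncard_neighborSet_q (i : Incidence X) : ((CX X).neighborSet (q i)).ncard = 2 := by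
  rw [show (CX X).neighborSet (q i) = {p i.1.1, r i.1.2} from Set.ext fun _ => adj_q_iff]
  exact Set.ncard_pair p_ne_r

lemma ncard_neighborSet_r (e : X.edgeSet) : ((CX X).neighborSet (r e)).ncard = 2 := by
  obtain ⟨e, he⟩ := e
  induction e using Sym2.ind with | h u w => ?_
  have hN : (CX X).neighborSet (r ⟨s(u, w), he⟩) =
      {q ⟨(u, ⟨s(u, w), he⟩), Sym2.mem_mk_left _ _⟩,
        q ⟨(w, ⟨s(u, w), he⟩), Sym2.mem_mk_right _ _⟩} := by
    refine Set.ext fun z => adj_r_iff.trans ⟨?_, ?_⟩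
    · rintro ⟨⟨⟨x, e⟩, hx⟩, rfl, rfl⟩
      obtain rfl | rfl : x = u ∨ x = w := Sym2.mem_iff.1 hx
      exacts [Or.inl rfl, Or.inr rfl]
    · rintro (rfl | rfl) <;> exact ⟨_, rfl, rfl⟩
  rw [hN]
  exact Set.ncard_pair (by simpa using (show X.Adj u w from he).ne)

lemma exists_apply_p_of_adj (φ : CX X ≃g CX Y) {u w : V} {u' : W}
    (hu : φ (p u) = p u') (huw : X.Adj u w) :
    ∃ w', ∃ h : Y.Adj u' w', φ (p w) = p w' ∧ φ (r ⟨s(u, w), huw⟩) = r ⟨s(u', w'), h⟩ := by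
  -- Follow `φ` along the path `p u, q (u, e), r e, q (w, e), p w`; injectivity of `φ`
  -- rules out the image turning back.
  set e : X.edgeSet := ⟨s(u, w), huw⟩
  have h₁ : (CX Y).Adj (p u') (φ (q ⟨(u, e), Sym2.mem_mk_left _ _⟩)) :=
    hu ▸ φ.map_adj_iff.2 (adj_p_q.2 rfl)
  obtain ⟨i, hi, hφi⟩ := adj_p_iff.1 h₁
  have h₂ : (CX Y).Adj (q i) (φ (r e)) := hφi ▸ φ.map_adj_iff.2 (adj_q_r.2 rfl)
  obtain hφe | hφe := adj_q_iff.1 h₂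
  · rw [hi, ← hu] at hφe
    exact absurd (φ.injective hφe) r_ne_p
  have h₃ : (CX Y).Adj (r i.1.2) (φ (q ⟨(w, e), Sym2.mem_mk_right _ _⟩)) :=
    hφe ▸ φ.map_adj_iff.2 (adj_r_q.2 rfl)
  obtain ⟨j, hj, hφj⟩ := adj_r_iff.1 h₃
  have h₄ : (CX Y).Adj (q j) (φ (p w)) := hφj ▸ φ.map_adj_iff.2 (adj_q_p.2 rfl)
  obtain hφw | hφw := adj_q_iff.1 h₄
  swap
  · rw [hj, ← hφe] at hφw
    exact absurd (φ.injective hφw) p_ne_r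
  have hne : u' ≠ j.1.1 := fun h => huw.ne (p_inj.1 (φ.injective (hu.trans (h ▸ hφw.symm))))
  have he : (i.1.2 : Sym2 W) = s(u', j.1.1) :=
    (Sym2.mem_and_mem_iff hne).1 ⟨hi ▸ i.2, hj ▸ j.2⟩
  refine ⟨j.1.1, ?_, hφw, hφe.trans (by rw [r_inj]; exact Subtype.ext he)⟩
  rw [← SimpleGraph.mem_edgeSet, ← he]
  exact i.1.2.2

lemma adj_of_apply_p (φ : CX X ≃g CX Y) {u w : V} {u' w' : W} (hu : φ (p u) = p u')
    (hw : φ (p w) = p w') (huw : X.Adj u w) : Y.Adj u' w' := by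
  obtain ⟨w'', h, hw'', -⟩ := exists_apply_p_of_adj φ hu huw
  rwa [p_inj.1 (hw.symm.trans hw'')]

lemma exists_apply_p_of_ncard_ne_two (φ : CX X ≃g CX Y) {v : V}
    (hv : (X.neighborSet v).ncard ≠ 2) : ∃ w, φ (p v) = p w := by
  have hφv : ((CX Y).neighborSet (φ (p v))).ncard ≠ 2 := by
    rwa [← Set.ncard_congr' (φ.mapNeighborSet _), ncard_neighborSet_p]
  obtain ⟨w, hw⟩ | ⟨i, hi⟩ | ⟨e, he⟩ := eq_p_or_q_or_r (φ (p v))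
  · exact ⟨w, hw⟩
  · exact absurd (ncard_neighborSet_q i) (hi ▸ hφv)
  · exact absurd (ncard_neighborSet_r e) (he ▸ hφv)

lemma forall_exists_apply_p (hX : X.Preconnected) (φ : CX X ≃g CX Y) {b : V}
    (hb : ∃ w, φ (p b) = p w) (v : V) : ∃ w, φ (p v) = p w :=
  SimpleGraph.Reachable.mem_of_adj_mem (S := {v | ∃ w, φ (p v) = p w})
    (fun _ _ huw ⟨_, hu⟩ =>
      let ⟨w', _, hw', _⟩ := exists_apply_p_of_adj φ hu huw
      ⟨w', hw'⟩)
    (hX b v) hb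

lemma exists_iso_apply_p (φ : CX X ≃g CX Y) (h : ∀ v, ∃ w, φ (p v) = p w)
    (h' : ∀ w, ∃ v, φ.symm (p w) = p v) : ∃ α : X ≃g Y, ∀ v, φ (p v) = p (α v) := by
  choose f hf using h
  choose g hg using h'
  have hgf : ∀ v, g (f v) = v := fun v => p_inj.1 (by rw [← hg, ← hf, φ.symm_apply_apply])
  have hfg : ∀ w, f (g w) = w := fun w => p_inj.1 (by rw [← hf, ← hg, φ.apply_symm_apply])
  refine ⟨⟨⟨f, g, hgf, hfg⟩, fun {u w} => ⟨fun huw => ?_, adj_of_apply_p φ (hf u) (hf w)⟩⟩, hf⟩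
  simpa [hgf] using adj_of_apply_p φ.symm (hg (f u)) (hg (f w)) huw

def mapIncidence (α : X ≃g Y) : Incidence X ≃ Incidence Y :=
  (α.toEquiv.prodCongr α.mapEdgeSet).subtypeEquiv fun x => by
    simp [SimpleGraph.Hom.mapEdgeSet, Sym2.mem_map]

def mapEquiv (α : X ≃g Y) : CXVert X ≃ CXVert Y :=
  α.toEquiv.sumCongr ((mapIncidence α).sumCongr α.mapEdgeSet)

@[simp] lemma mapEquiv_p (α : X ≃g Y) (v : V) : mapEquiv α (p v) = p (α v) := rfl
@[simp] lemma mapEquiv_q (α : X ≃g Y) (i : Incidence X) :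
    mapEquiv α (q i) = q (mapIncidence α i) := rfl
@[simp] lemma mapEquiv_r (α : X ≃g Y) (e : X.edgeSet) :
    mapEquiv α (r e) = r (α.mapEdgeSet e) := rfl

def map (α : X ≃g Y) : CX X ≃g CX Y where
  toEquiv := mapEquiv α
  map_rel_iff' := by
    intro a b
    obtain ⟨v, rfl⟩ | ⟨i, rfl⟩ | ⟨e, rfl⟩ := eq_p_or_q_or_r a <;>
    obtain ⟨w, rfl⟩ | ⟨j, rfl⟩ | ⟨e', rfl⟩ := eq_p_or_q_or_r b <;>
    simp [mapIncidence, -SimpleGraph.Iso.mapEdgeSet_apply]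

lemma eq_map_of_apply_p (φ : CX X ≃g CX Y) (α : X ≃g Y) (h : ∀ v, φ (p v) = p (α v)) :
    φ = map α := by
  have hr : ∀ e, φ (r e) = r (α.mapEdgeSet e) := by
    rintro ⟨e, he⟩
    induction e using Sym2.ind with | h u w => ?_
    obtain ⟨w', _, hw', hφe⟩ := exists_apply_p_of_adj φ (h u) he
    obtain rfl := p_inj.1 (hw'.symm.trans (h w))
    exact hφe
  refine RelIso.ext fun z => ?_
  obtain ⟨v, rfl⟩ | ⟨i, rfl⟩ | ⟨e, rfl⟩ := eq_p_or_q_or_r z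
  · exact h v
  · have h₁ : (CX Y).Adj (p (α i.1.1)) (φ (q i)) := h _ ▸ φ.map_adj_iff.2 (adj_p_q.2 rfl)
    obtain ⟨j, hj, hφi⟩ := adj_p_iff.1 h₁
    have h₂ : (CX Y).Adj (q j) (r (α.mapEdgeSet i.1.2)) :=
      hφi ▸ hr _ ▸ φ.map_adj_iff.2 (adj_q_r.2 rfl)
    rw [hφi]
    exact q_inj.2 (Subtype.ext (Prod.ext hj (adj_q_r.1 h₂)))
  · exact hr e

def mapAut : (X ≃g X) →* (CX X ≃g CX X) :=
  MonoidHom.mk' map fun _ _ => (eq_map_of_apply_p _ _ fun _ => rfl).symm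

lemma mapAut_injective : Function.Injective (mapAut (X := X)) :=
  fun _ _ h => RelIso.ext fun v => p_inj.1 (DFunLike.congr_fun h (p v))

end CX

/-- If `X` is a connected finite graph, not isomorphic to any cycle `C_n`, then
`Aut(C_X) ≅ Aut(X)`. -/
theorem aut_CX_iso_aut {V : Type} [Fintype V] (X : SimpleGraph V)
    (hconn : X.Connected)
    (hnotcycle : ∀ n : ℕ, IsEmpty (X ≃g SimpleGraph.cycleGraph n)) :
    Nonempty ((CX X ≃g CX X) ≃* (X ≃g X)) := by
  obtain ⟨b, hb⟩ : ∃ b, (X.neighborSet b).ncard ≠ 2 := by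
    by_contra! h
    obtain ⟨n, ⟨e⟩⟩ := hconn.exists_iso_cycleGraph h
    exact (hnotcycle n).false e
  have hP : ∀ (φ : CX X ≃g CX X) v, ∃ w, φ (CX.p v) = CX.p w := fun φ =>
    CX.forall_exists_apply_p hconn.preconnected φ (CX.exists_apply_p_of_ncard_ne_two φ hb)
  refine ⟨(MulEquiv.ofBijective CX.mapAut ⟨CX.mapAut_injective, fun φ => ?_⟩).symm⟩
  obtain ⟨α, hα⟩ := CX.exists_iso_apply_p φ (hP φ) (hP φ.symm)
  exact ⟨α, (CX.eq_map_of_apply_p φ α hα).symm⟩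
end

section
/- Let X be a finite bipartite graph. Then the graph C_X obtained from X by replacing every edge with a path of length four is the comparability graph of the intersection of four linear orders; i.e., C_X has order dimension at most 4. -/
open Function

namespace SimpleGraph

variable {α ι : Type*}

def IsRealizedBy (G : SimpleGraph α) (L : ι → LinearOrder α) : Prop :=
  ∀ a b, G.Adj a b ↔ a ≠ b ∧ ((∀ i, (L i).le a b) ∨ ∀ i, (L i).le b a)

lemma IsRealizedBy.comp_equiv {G : SimpleGraph α} {L : ι → LinearOrder α}
    (hL : G.IsRealizedBy L) {κ : Type*} (e : κ ≃ ι) : G.IsRealizedBy (L ∘ e) := by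
  intro a b
  simp only [hL a b, e.surjective.forall]

end SimpleGraph

section Subdivision

variable {A B : Type*} (R : A → B → Prop)

abbrev Incidence : Type _ := {p : A × B // R p.1 p.2}

def subdivisionRel : A ⊕ (Incidence R ⊕ B) → A ⊕ (Incidence R ⊕ B) → Prop
  | .inl a, .inr (.inl e) => a = e.1.1
  | .inr (.inl e), .inr (.inr b) => e.1.2 = b
  | _, _ => False

def subdivisionGraph : SimpleGraph (A ⊕ (Incidence R ⊕ B)) :=
  SimpleGraph.fromRel (subdivisionRel R)

variable {K : Type*} [LinearOrder K] (σ : A ⊕ B → K)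

def subdivisionLevel : A ⊕ (Incidence R ⊕ B) → K
  | .inl a => σ (.inl a)
  | .inr (.inl e) => max (σ (.inl e.1.1)) (σ (.inr e.1.2))
  | .inr (.inr b) => σ (.inr b)

def subdivisionTag : A ⊕ (Incidence R ⊕ B) → WithBot (K ×ₗ K)
  | .inr (.inl e) => (toLex (σ (.inl e.1.1), σ (.inr e.1.2)) : K ×ₗ K)
  | _ => ⊥

-- An edge vertex sits just above the higher of its two ends; its tag, `⊥` on `A ⊕ B`, separates
-- it from that end and from the other edge vertices at the same level.
def subdivisionKey (x : A ⊕ (Incidence R ⊕ B)) : K ×ₗ WithBot (K ×ₗ K) :=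
  toLex (subdivisionLevel R σ x, subdivisionTag R σ x)

variable {R σ}

lemma subdivisionKey_injective (hσ : Injective σ) : Injective (subdivisionKey R σ) := by
  rintro (a | e | b) (a' | e' | b') h <;>
    simp_all [subdivisionKey, subdivisionLevel, subdivisionTag, hσ.eq_iff, Subtype.ext_iff,
      Prod.ext_iff]

lemma subdivisionKey_lt_of_level_lt {x y : A ⊕ (Incidence R ⊕ B)}
    (h : subdivisionLevel R σ x < subdivisionLevel R σ y) :
    subdivisionKey R σ x < subdivisionKey R σ y :=
  Prod.Lex.toLex_lt_toLex.2 (.inl h)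

variable (R σ) in
lemma subdivisionKey_inl_lt (e : Incidence R) :
    subdivisionKey R σ (.inl e.1.1) < subdivisionKey R σ (.inr (.inl e)) :=
  Prod.Lex.toLex_lt_toLex.2 <|
    (le_max_left _ _).lt_or_eq.imp id fun h => ⟨h, WithBot.bot_lt_coe _⟩

variable (R σ) in
lemma subdivisionKey_inr_lt (e : Incidence R) :
    subdivisionKey R σ (.inr (.inr e.1.2)) < subdivisionKey R σ (.inr (.inl e)) :=
  Prod.Lex.toLex_lt_toLex.2 <|
    (le_max_right _ _).lt_or_eq.imp id fun h => ⟨h, WithBot.bot_lt_coe _⟩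

lemma subdivisionKey_lt_or_gt_of_rel {x y : A ⊕ (Incidence R ⊕ B)}
    (h : subdivisionRel R x y) :
    (∀ σ : A ⊕ B → K, subdivisionKey R σ x < subdivisionKey R σ y) ∨
      ∀ σ : A ⊕ B → K, subdivisionKey R σ y < subdivisionKey R σ x := by
  rcases x with a | e | b <;> rcases y with a' | e' | b' <;> simp only [subdivisionRel] at h
  · subst h; exact .inl fun σ => subdivisionKey_inl_lt R σ e'
  · subst h; exact .inr fun σ => subdivisionKey_inr_lt R σ e

variable {ι : Type*} {σ : ι → A ⊕ B → K}

lemma exists_subdivisionLevel_lt (hsep : ∀ w w', w ≠ w' → ∃ i, σ i w < σ i w')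
    (habove : ∀ (e : Incidence R) w, w ≠ .inl e.1.1 → w ≠ .inr e.1.2 →
      ∃ i, σ i (.inl e.1.1) < σ i w ∧ σ i (.inr e.1.2) < σ i w)
    {x y : A ⊕ (Incidence R ⊕ B)} (hne : x ≠ y)
    (hxy : ¬ subdivisionRel R x y) (hyx : ¬ subdivisionRel R y x) :
    ∃ i, subdivisionLevel R (σ i) x < subdivisionLevel R (σ i) y := by
  have above (e : Incidence R) (w : A ⊕ B) (h₁ : w ≠ .inl e.1.1) (h₂ : w ≠ .inr e.1.2) :
      ∃ i, subdivisionLevel R (σ i) (.inr (.inl e)) < σ i w :=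
    (habove e w h₁ h₂).imp fun _ h => max_lt h.1 h.2
  rcases x with a | e | b <;> rcases y with a' | e' | b' <;>
    simp only [subdivisionRel, ne_eq, Sum.inl.injEq, Sum.inr.injEq] at hne hxy hyx
  · exact hsep _ _ (by simpa using hne)
  · exact (hsep _ _ (by simpa using hxy)).imp fun _ h => lt_max_of_lt_left h
  · exact hsep _ _ Sum.inl_ne_inr
  · exact above e _ (by simpa using hyx) Sum.inl_ne_inr
  · by_cases h : e'.1.1 = e.1.1
    · have h' : e'.1.2 ≠ e.1.2 := fun h' => hne (Subtype.ext (Prod.ext h.symm h'.symm))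
      obtain ⟨i, hi⟩ := above e (.inr e'.1.2) Sum.inr_ne_inl (by simpa using h')
      exact ⟨i, hi.trans_le (le_max_right _ _)⟩
    · obtain ⟨i, hi⟩ := above e (.inl e'.1.1) (by simpa using h) Sum.inl_ne_inr
      exact ⟨i, hi.trans_le (le_max_left _ _)⟩
  · exact above e _ Sum.inr_ne_inl (by simpa [eq_comm] using hxy)
  · exact hsep _ _ Sum.inr_ne_inl
  · exact (hsep _ _ (by simpa [eq_comm] using hyx)).imp fun _ h => lt_max_of_lt_right h
  · exact hsep _ _ (by simpa using hne)

theorem subdivisionGraph_isRealizedBy (hsep : ∀ w w', w ≠ w' → ∃ i, σ i w < σ i w')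
    (habove : ∀ (e : Incidence R) w, w ≠ .inl e.1.1 → w ≠ .inr e.1.2 →
      ∃ i, σ i (.inl e.1.1) < σ i w ∧ σ i (.inr e.1.2) < σ i w)
    (hσ : ∀ i, Injective (σ i)) :
    (subdivisionGraph R).IsRealizedBy fun i =>
      LinearOrder.lift' (subdivisionKey R (σ i)) (subdivisionKey_injective (hσ i)) := by
  intro x y
  rw [subdivisionGraph, SimpleGraph.fromRel_adj]
  refine and_congr_right fun hne => ⟨fun hrel => ?_, fun hle => ?_⟩
  · rcases hrel with h | h <;> rcases subdivisionKey_lt_or_gt_of_rel (K := K) h with h' | h'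
    exacts [.inl fun i => (h' _).le, .inr fun i => (h' _).le, .inr fun i => (h' _).le,
      .inl fun i => (h' _).le]
  · by_contra! hrel
    obtain ⟨i, hi⟩ := exists_subdivisionLevel_lt hsep habove hne hrel.1 hrel.2
    obtain ⟨j, hj⟩ := exists_subdivisionLevel_lt hsep habove hne.symm hrel.2 hrel.1
    rcases hle with h | h
    · exact (subdivisionKey_lt_of_level_lt hj).not_ge (h j)
    · exact (subdivisionKey_lt_of_level_lt hi).not_ge (h i)

end Subdivision

section LowerOrders

variable {G : Type*} [AddCommGroup G]

def orient (d : Bool) (x : G) : G := bif d then x else -x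

lemma orient_injective (d : Bool) : Injective (orient (G := G) d) := by
  cases d
  exacts [neg_injective, injective_id]

lemma exists_orient_lt [LinearOrder G] [IsOrderedAddMonoid G] {x y : G} (h : x ≠ y) :
    ∃ d, orient d x < orient d y := by
  rcases h.lt_or_gt with h | h
  exacts [⟨true, h⟩, ⟨false, neg_lt_neg h⟩]

variable {A B : Type*} (rA : A → ℤ) (rB : B → ℤ)

def lowerKey (s d : Bool) (w : A ⊕ B) : ℤ ⊕ₗ ℤ :=
  toLex (bif s then w.map (orient d ∘ rA) (orient d ∘ rB)
    else (w.map (orient d ∘ rA) (orient d ∘ rB)).swap)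

variable {rA rB}

lemma lowerKey_injective (hrA : Injective rA) (hrB : Injective rB) (s d : Bool) :
    Injective (lowerKey rA rB s d) := by
  rintro (a | b) (a' | b') h <;> cases s <;>
    simp_all [lowerKey, (orient_injective d).eq_iff, hrA.eq_iff, hrB.eq_iff]

lemma exists_lowerKey_lt (hrA : Injective rA) (hrB : Injective rB) {w w' : A ⊕ B}
    (hne : w ≠ w') :
    ∃ i : Bool × Bool, lowerKey rA rB i.1 i.2 w < lowerKey rA rB i.1 i.2 w' := by
  rcases w with a | b <;> rcases w' with a' | b'
  · obtain ⟨d, hd⟩ := exists_orient_lt (hrA.ne (by simpa using hne))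
    exact ⟨(true, d), by simpa [lowerKey] using hd⟩
  · exact ⟨(true, true), by simp [lowerKey]⟩
  · exact ⟨(false, true), by simp [lowerKey]⟩
  · obtain ⟨d, hd⟩ := exists_orient_lt (hrB.ne (by simpa using hne))
    exact ⟨(true, d), by simpa [lowerKey] using hd⟩

lemma exists_lowerKey_lt_and_lt (hrA : Injective rA) (hrB : Injective rB) (a : A) (b : B)
    {w : A ⊕ B} (ha : w ≠ .inl a) (hb : w ≠ .inr b) :
    ∃ i : Bool × Bool, lowerKey rA rB i.1 i.2 (.inl a) < lowerKey rA rB i.1 i.2 w ∧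
      lowerKey rA rB i.1 i.2 (.inr b) < lowerKey rA rB i.1 i.2 w := by
  rcases w with a' | b'
  · obtain ⟨d, hd⟩ := exists_orient_lt (hrA.ne (by simpa [eq_comm] using ha))
    exact ⟨(false, d), by simpa [lowerKey] using hd⟩
  · obtain ⟨d, hd⟩ := exists_orient_lt (hrB.ne (by simpa [eq_comm] using hb))
    exact ⟨(true, d), by simpa [lowerKey] using hd⟩

end LowerOrders

theorem exists_isRealizedBy_subdivisionGraph {A B : Type*} [Countable A] [Countable B]
    (R : A → B → Prop) :
    ∃ L : Bool × Bool → LinearOrder (A ⊕ (Incidence R ⊕ B)),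
      (subdivisionGraph R).IsRealizedBy L := by
  obtain ⟨rA, hrA⟩ := Countable.exists_injective_nat A
  obtain ⟨rB, hrB⟩ := Countable.exists_injective_nat B
  have hrA' : Injective fun a => (rA a : ℤ) := Nat.cast_injective.comp hrA
  have hrB' : Injective fun b => (rB b : ℤ) := Nat.cast_injective.comp hrB
  exact ⟨_, subdivisionGraph_isRealizedBy (fun _ _ => exists_lowerKey_lt hrA' hrB')
    (fun e _ ha hb => exists_lowerKey_lt_and_lt hrA' hrB' e.1.1 e.1.2 ha hb)
    fun i => lowerKey_injective hrA' hrB' i.1 i.2⟩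

lemma CX_eq_subdivisionGraph {V : Type} (X : SimpleGraph V) :
    CX X = subdivisionGraph (fun v (e : X.edgeSet) => v ∈ (e : Sym2 V)) := by
  ext x y
  rcases x with _ | _ | _ <;> rcases y with _ | _ | _ <;> rfl

theorem CX_of_bipartite_dim_le_four_general {V : Type} [Fintype V] (X : SimpleGraph V) :
    ∃ L : Fin 4 → LinearOrder (CXVert X),
      ∀ a b : CXVert X, (CX X).Adj a b ↔
        (a ≠ b ∧ ((∀ i, (L i).le a b) ∨ (∀ i, (L i).le b a))) := by
  obtain ⟨L, hL⟩ :=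
    exists_isRealizedBy_subdivisionGraph fun v (e : X.edgeSet) => v ∈ (e : Sym2 V)
  rw [← CX_eq_subdivisionGraph] at hL
  let e : Fin 4 ≃ Bool × Bool := Fintype.equivOfCardEq rfl
  exact ⟨L ∘ e, hL.comp_equiv e⟩

/-- If `X` is a finite bipartite graph, then `C_X` is the comparability graph
of the intersection of four linear orders; i.e. `C_X` has order dimension at
most `4`. -/
theorem CX_of_bipartite_dim_le_four {V : Type} [Fintype V] (X : SimpleGraph V)
    (hbip : X.Colorable 2) :
    ∃ L : Fin 4 → LinearOrder (CXVert X),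
      ∀ a b : CXVert X, (CX X).Adj a b ↔
        (a ≠ b ∧ ((∀ i, (L i).le a b) ∨ (∀ i, (L i).le b a))) :=
  CX_of_bipartite_dim_le_four_general X
end
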